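/- arXiv:2502.00434 — 4 statements merged into one kernel-verified Lean document; each statement's English description precedes it below -/
import Mathlib

section
/- Let δ be the extended transition function of a commutative STS with at most w states, defined on binary strings, and let n ≥ w. Then there exist nonnegative integers a, m, b with a + m + b = w and m ≥ 1 such that for all x, x', y, y' ≥ 0 with x + y = x' + y' = n, x, x' ≥ a, y, y' ≥ b, and x ≡ x' (mod m), we have δ(1^x 0^y) = δ(1^{x'} 0^{y'}). -/
/-- The extended transition function of a state transition system. -/
def delta {S : Type*} (f0 f1 : S → S) (s0 : S) (l : List Bool) : S :=
  l.foldl (fun s b => if b then f1 s else f0 s) s0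

/-!
By pigeonhole, two of the `w + 1` states `δ(1^u 0^(w-u))`, `u ≤ w`, coincide:
`δ(1^a 0^(m+b)) = δ(1^(a+m) 0^b)`. As `δ(1^x 0^y) = f0^[y] (f1^[x] s0)` and the transitions
commute, applying further `f0`s and `f1`s to both sides shows that trading `m` zeros for `m` ones
never changes the state as long as at least `a` ones and `b` zeros remain.
-/

section Delta

variable {S : Type*} (f0 f1 : S → S)

theorem foldl_replicate_bool (c : Bool) (k : ℕ) (s : S) :
    (List.replicate k c).foldl (fun s b => if b then f1 s else f0 s) s
      = (if c then f1 else f0)^[k] s := by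
  induction k generalizing s with
  | zero => rfl
  | succ k ih => cases c <;> simp [List.replicate_succ, ih, Function.iterate_succ_apply]

theorem delta_replicate_append (s0 : S) (x y : ℕ) :
    delta f0 f1 s0 (List.replicate x true ++ List.replicate y false) = f0^[y] (f1^[x] s0) := by
  simp only [delta, List.foldl_append, foldl_replicate_bool, if_true, Bool.false_eq_true,
    if_false]

end Delta

namespace Function.Commute

variable {α : Type*} {f g : α → α} {s : α} {a b m : ℕ}

theorem iterate_shift (h : Function.Commute f g)
    (E : f^[b + m] (g^[a] s) = f^[b] (g^[a + m] s)) {x y : ℕ} (hx : a ≤ x) (hy : b ≤ y) :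
    f^[y + m] (g^[x] s) = f^[y] (g^[x + m] s) := by
  obtain ⟨p, rfl⟩ := Nat.exists_eq_add_of_le hx
  obtain ⟨q, rfl⟩ := Nat.exists_eq_add_of_le hy
  have hpq : ∀ i j, f^[q + i] (g^[p + j] s) = g^[p] (f^[q] (f^[i] (g^[j] s))) := fun i j => by
    rw [iterate_add_apply, iterate_add_apply, (h.iterate_iterate i p).eq,
      (h.iterate_iterate q p).eq]
  calc f^[b + q + m] (g^[a + p] s) = f^[q + (b + m)] (g^[p + a] s) := by ring_nf
    _ = f^[q + b] (g^[p + (a + m)] s) := by rw [hpq, hpq, E]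
    _ = f^[b + q] (g^[a + p + m] s) := by ring_nf

theorem iterate_shift_mul (h : Function.Commute f g)
    (E : f^[b + m] (g^[a] s) = f^[b] (g^[a + m] s)) (k : ℕ) {x y : ℕ} (hx : a ≤ x)
    (hy : b ≤ y) :
    f^[y + k * m] (g^[x] s) = f^[y] (g^[x + k * m] s) := by
  induction k generalizing x with
  | zero => simp
  | succ k ih =>
    calc f^[y + (k + 1) * m] (g^[x] s) = f^[(y + k * m) + m] (g^[x] s) := by ring_nf
      _ = f^[y + k * m] (g^[x + m] s) := h.iterate_shift E hx (by omega)
      _ = f^[y] (g^[x + m + k * m] s) := ih (by omega)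
      _ = f^[y] (g^[x + (k + 1) * m] s) := by ring_nf

theorem iterate_eq_of_modEq (h : Function.Commute f g)
    (E : f^[b + m] (g^[a] s) = f^[b] (g^[a + m] s)) {x x' y y' : ℕ} (hsum : x + y = x' + y')
    (hx : a ≤ x) (hx' : a ≤ x') (hy : b ≤ y) (hy' : b ≤ y') (hmod : x ≡ x' [MOD m]) :
    f^[y] (g^[x] s) = f^[y'] (g^[x'] s) := by
  wlog hle : x ≤ x' generalizing x x' y y'
  · exact (this hsum.symm hx' hx hy' hy hmod.symm (by omega)).symm
  obtain ⟨k, hk⟩ := (Nat.modEq_iff_dvd' hle).mp hmod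
  obtain rfl : x' = x + k * m := by rw [mul_comm, ← hk]; omega
  obtain rfl : y = y' + k * m := by omega
  exact h.iterate_shift_mul E k hx hy'

end Function.Commute

theorem exists_lt_le_map_eq_of_card_le {S : Type*} [Fintype S] (φ : ℕ → S) {w : ℕ}
    (hcard : Fintype.card S ≤ w) : ∃ u v, u < v ∧ v ≤ w ∧ φ u = φ v := by
  obtain ⟨i, hi, j, hj, hne, hij⟩ := Finset.exists_ne_map_eq_of_card_lt_of_maps_to
    (t := Finset.univ) (by simpa [Nat.lt_succ_iff] using hcard)
    (fun i _ => Finset.mem_univ (φ i) : ∀ i ∈ Finset.range (w + 1), φ i ∈ Finset.univ)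
  rw [Finset.mem_range] at hi hj
  rcases hne.lt_or_gt with hlt | hlt
  · exact ⟨i, j, hlt, by omega, hij⟩
  · exact ⟨j, i, hlt, by omega, hij.symm⟩

theorem stmt_2_general {S : Type*} [Fintype S] (f0 f1 : S → S) (s0 : S)
    (hcomm : ∀ s, f0 (f1 s) = f1 (f0 s))
    (w n : ℕ) (hcard : Fintype.card S ≤ w) :
    ∃ a m b : ℕ, a + m + b = w ∧ 1 ≤ m ∧
      ∀ x x' y y' : ℕ, x + y = n → x' + y' = n →
        a ≤ x → a ≤ x' → b ≤ y → b ≤ y' → x % m = x' % m →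
        delta f0 f1 s0 (List.replicate x true ++ List.replicate y false) =
        delta f0 f1 s0 (List.replicate x' true ++ List.replicate y' false) := by
  obtain ⟨u, v, huv, hvw, hE⟩ :=
    exists_lt_le_map_eq_of_card_le (fun i => f0^[w - i] (f1^[i] s0)) hcard
  refine ⟨u, v - u, w - v, by omega, by omega, fun x x' y y' hxy hxy' hx hx' hy hy' hmod => ?_⟩
  have E : f0^[w - v + (v - u)] (f1^[u] s0) = f0^[w - v] (f1^[u + (v - u)] s0) := by
    rwa [show w - v + (v - u) = w - u by omega, show u + (v - u) = v by omega]
  rw [delta_replicate_append, delta_replicate_append]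
  exact Function.Commute.iterate_eq_of_modEq (f := f0) hcomm E (by omega) hx hx' hy hy' hmod

theorem stmt_2 {S : Type*} [Fintype S] (f0 f1 : S → S) (s0 : S)
    (hcomm : ∀ s, f0 (f1 s) = f1 (f0 s))
    (w n : ℕ) (hcard : Fintype.card S ≤ w) (hn : w ≤ n) :
    ∃ a m b : ℕ, a + m + b = w ∧ 1 ≤ m ∧
      ∀ x x' y y' : ℕ, x + y = n → x' + y' = n →
        a ≤ x → a ≤ x' → b ≤ y → b ≤ y' → x % m = x' % m →
        delta f0 f1 s0 (List.replicate x true ++ List.replicate y false) =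
        delta f0 f1 s0 (List.replicate x' true ++ List.replicate y' false) :=
  stmt_2_general f0 f1 s0 hcomm w n hcard
end

section
/- Let f : {0,1}^n → {0,1} be any symmetric Boolean function (i.e., f(x) depends only on the number of 1s in x). Then for a, b, m with a + m + b = w as given by a width-w commutative OBDD of f, f is described by a commutative STS with at most (a+m)·(b+1) ≤ (w+1)²/4 states, with state set [0,b] × [0,a+m-1], transition functions f0(i,j) = (min(i+1,b), j), f1(i,j) = (i, j+1) if j < a+m-1 and (i, a) if j = a+m-1. -/
theorem delta_prod_eq_iterate {α β : Type*} (g : α → α) (h : β → β) (l : List Bool)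
    (s : α × β) :
    delta (fun p => (g p.1, p.2)) (fun p => (p.1, h p.2)) s l =
      (g^[l.count false] s.1, h^[l.count true] s.2) := by
  induction l generalizing s with
  | nil => rfl
  | cons c l ih =>
    cases c <;> simp only [delta, List.foldl_cons] at ih ⊢ <;> rw [ih] <;>
      simp [Function.iterate_succ_apply]

theorem iterate_min_succ_zero (b y : ℕ) : (fun i => min (i + 1) b)^[y] 0 = min y b := by
  induction y with
  | zero => simp
  | succ y ih => rw [Function.iterate_succ_apply', ih]; omega

/-- Runs through `0, 1, …, a + m - 1` and then cycles back to `a`. -/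
def lassoSucc (a m j : ℕ) : ℕ := if j + 1 < a + m then j + 1 else a

theorem lassoSucc_iterate_zero {a m : ℕ} (hm : 0 < m) (x : ℕ) :
    (lassoSucc a m)^[x] 0 = if x < a then x else a + (x - a) % m := by
  induction x with
  | zero => split_ifs <;> simp_all
  | succ x ih =>
    rw [Function.iterate_succ_apply', ih, lassoSucc]
    by_cases hxa : x + 1 < a
    · simp [hxa, show x < a by omega]; omega
    by_cases hxa' : x < a
    · simp [hxa', show x + 1 = a by omega]
    simp only [hxa', hxa, if_false]
    rw [show x + 1 - a = x - a + 1 by omega, Nat.add_mod_eq_ite]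
    have := Nat.mod_lt (x - a) hm
    rcases Nat.lt_or_ge 1 m with h1 | h1
    · rw [Nat.mod_eq_of_lt h1]; split_ifs <;> omega
    · obtain rfl : m = 1 := by omega
      simp [Nat.mod_one]

theorem eq_or_modEq_of_lassoSucc_iterate_eq {a m x x' : ℕ} (hm : 0 < m)
    (h : (lassoSucc a m)^[x] 0 = (lassoSucc a m)^[x'] 0) :
    x = x' ∨ a ≤ x ∧ a ≤ x' ∧ x ≡ x' [MOD m] := by
  rw [lassoSucc_iterate_zero hm, lassoSucc_iterate_zero hm] at h
  split_ifs at h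
  · exact .inl h
  · omega
  · omega
  have hax : a ≤ x := by omega
  have hax' : a ≤ x' := by omega
  have hmod : x - a + a ≡ x' - a + a [MOD m] := Nat.ModEq.add_right a (Nat.add_left_cancel h)
  rw [Nat.sub_add_cancel hax, Nat.sub_add_cancel hax'] at hmod
  exact .inr ⟨hax, hax', hmod⟩

theorem exists_set_mem_iff_of_eq_imp {S : Type*} (g : List Bool → S) (f : List Bool → Bool)
    (P : List Bool → Prop) (h : ∀ l l', P l → P l' → g l = g l' → f l = f l') :
    ∃ T : Set S, ∀ l, P l → (g l ∈ T ↔ f l = true) :=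
  ⟨g '' {l | P l ∧ f l = true}, fun l hl =>
    ⟨fun ⟨l', ⟨hl', hf⟩, hg⟩ => h l' l hl' hl hg ▸ hf, fun hf => ⟨l, ⟨hl, hf⟩, rfl⟩⟩⟩

theorem apply_eq_apply_replicate_count {n : ℕ} {f : List Bool → Bool}
    (hsym : ∀ l l' : List Bool, l.length = n → l'.length = n →
      l.count true = l'.count true → f l = f l')
    {l : List Bool} (hl : l.length = n) :
    f l = f (List.replicate (l.count true) true ++ List.replicate (l.count false) false) := by
  refine hsym _ _ hl ?_ (by simp [List.count_replicate])
  simp [← hl, List.count_true_add_count_false]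

theorem apply_replicate_eq_of_lassoSucc_iterate_eq {n a m b x y x' y' : ℕ} (hm : 0 < m)
    {f : List Bool → Bool}
    (hpattern : ∀ x x' y y' : ℕ, x + y = n → x' + y' = n →
      a ≤ x → a ≤ x' → b ≤ y → b ≤ y' → x % m = x' % m →
      f (List.replicate x true ++ List.replicate y false) =
        f (List.replicate x' true ++ List.replicate y' false))
    (hxy : x + y = n) (hxy' : x' + y' = n) (hy : min y b = min y' b)
    (hx : (lassoSucc a m)^[x] 0 = (lassoSucc a m)^[x'] 0) :
    f (List.replicate x true ++ List.replicate y false) =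
      f (List.replicate x' true ++ List.replicate y' false) := by
  obtain rfl | ⟨hax, hax', hmod⟩ := eq_or_modEq_of_lassoSucc_iterate_eq hm hx
  · obtain rfl : y = y' := by omega
    rfl
  · obtain rfl | ⟨hby, hby'⟩ : y = y' ∨ b ≤ y ∧ b ≤ y' := by omega
    · obtain rfl : x = x' := by omega
      rfl
    · exact hpattern x x' y y' hxy hxy' hax hax' hby hby' hmod

/-- A symmetric Boolean function on `n` inputs with a width-`w` commutative OBDD,
with parameters `a`, `m`, `b` (with `a + m + b = w`) given by the modulo-pattern
lemma, is described by a commutative STS with state set `[0,b] × [0,a+m-1]`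
(hence at most `(a+m)·(b+1) ≤ (w+1)²/4` states), transition functions
`f0(i,j) = (min(i+1,b), j)` and `f1(i,j) = (i, j+1)` if `j < a+m-1`,
`f1(i,j) = (i, a)` if `j = a+m-1`. -/
theorem stmt_8 (n w a m b : ℕ) (habm : a + m + b = w) (hm : 1 ≤ m)
    (f : List Bool → Bool)
    (hsym : ∀ l l' : List Bool, l.length = n → l'.length = n →
      l.count true = l'.count true → f l = f l')
    (hpattern : ∀ x x' y y' : ℕ, x + y = n → x' + y' = n →
      a ≤ x → a ≤ x' → b ≤ y → b ≤ y' → x % m = x' % m →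
      f (List.replicate x true ++ List.replicate y false) =
        f (List.replicate x' true ++ List.replicate y' false)) :
    ∃ T : Set (ℕ × ℕ),
      (∀ p : ℕ × ℕ,
        (fun p : ℕ × ℕ => (min (p.1 + 1) b, p.2))
          ((fun p : ℕ × ℕ => (p.1, if p.2 + 1 < a + m then p.2 + 1 else a)) p) =
        (fun p : ℕ × ℕ => (p.1, if p.2 + 1 < a + m then p.2 + 1 else a))
          ((fun p : ℕ × ℕ => (min (p.1 + 1) b, p.2)) p)) ∧
      (∀ l : List Bool, l.length = n →
        (delta (fun p : ℕ × ℕ => (min (p.1 + 1) b, p.2))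
               (fun p : ℕ × ℕ => (p.1, if p.2 + 1 < a + m then p.2 + 1 else a))
               (0, 0) l ∈ T ↔ f l = true)) ∧
      4 * ((a + m) * (b + 1)) ≤ (w + 1) ^ 2 := by
  set state := delta (fun p : ℕ × ℕ => (min (p.1 + 1) b, p.2))
    (fun p : ℕ × ℕ => (p.1, if p.2 + 1 < a + m then p.2 + 1 else a)) (0, 0)
  have hstate (l : List Bool) :
      state l = (min (l.count false) b, (lassoSucc a m)^[l.count true] 0) := by
    rw [← iterate_min_succ_zero]
    exact delta_prod_eq_iterate (fun i => min (i + 1) b) (lassoSucc a m) l (0, 0)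
  obtain ⟨T, hT⟩ := exists_set_mem_iff_of_eq_imp state f (·.length = n) fun l l' hl hl' h => by
    rw [hstate, hstate, Prod.mk.injEq] at h
    rw [apply_eq_apply_replicate_count hsym hl, apply_eq_apply_replicate_count hsym hl']
    exact apply_replicate_eq_of_lassoSucc_iterate_eq hm hpattern
      (hl ▸ l.count_true_add_count_false) (hl' ▸ l'.count_true_add_count_false) h.1 h.2
  refine ⟨T, fun _ => rfl, hT, ?_⟩
  calc 4 * ((a + m) * (b + 1)) = 4 * (a + m) * (b + 1) := by ring
    _ ≤ (a + m + (b + 1)) ^ 2 := four_mul_le_sq_add _ _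
    _ = (w + 1) ^ 2 := by rw [← habm]; ring
end

section
/- Let V be a finite set, R a commutative ring, and f, g : 2^V → R. Define the union product (f ∪ g)(X) := Σ_{A ∪ B = X} f(A)·g(B), where the sum is over all pairs (A, B) of subsets with A ∪ B = X. Then ζ(f ∪ g) = (ζf)·(ζg) pointwise, i.e., for all X ⊆ V, Σ_{Y ⊆ X} (f ∪ g)(Y) = (Σ_{Y ⊆ X} f(Y)) · (Σ_{Y ⊆ X} g(Y)). Consequently f ∪ g = μ((ζf)·(ζg)). -/
open Finset

/-- The zeta transform `(ζf)(X) = Σ_{Y ⊆ X} f(Y)`. -/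
def zetaT {V R : Type*} [DecidableEq V] [CommRing R] (f : Finset V → R)
    (X : Finset V) : R :=
  ∑ Y ∈ X.powerset, f Y

/-- The Moebius transform `(μf)(X) = Σ_{Y ⊆ X} (-1)^{|X \ Y|} f(Y)`. -/
def moebiusT {V R : Type*} [DecidableEq V] [CommRing R] (f : Finset V → R)
    (X : Finset V) : R :=
  ∑ Y ∈ X.powerset, (-1 : R) ^ (X \ Y).card * f Y

/-- The union (cover) product `(f ∪ g)(X) = Σ_{A ∪ B = X} f(A)·g(B)`. -/
def unionProd {V R : Type*} [DecidableEq V] [CommRing R] (f g : Finset V → R)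
    (X : Finset V) : R :=
  ∑ p ∈ (X.powerset ×ˢ X.powerset).filter (fun p => p.1 ∪ p.2 = X),
    f p.1 * g p.2

/-!
Sorting the pairs `(A, B)` of subsets of `X` by `A ∪ B` turns `(ζf)(X) (ζg)(X)` into
`Σ_{Y ⊆ X} (f ∪ g)(Y)`; applying `μ` then recovers `f ∪ g`. Möbius inversion `μ ∘ ζ = id` comes
down to the alternating sum `Σ_{Z ⊆ Y ⊆ X} (-1)^{|X \ Y|}` vanishing unless `Z = X`: complementation in
`X` identifies the interval `[Z, X]` with the powerset of `X \ Z`.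
-/

section

variable {V R : Type*} [DecidableEq V] [CommRing R]

theorem sum_Icc_neg_one_pow_card_sdiff {Z X : Finset V} (hZX : Z ⊆ X) :
    ∑ Y ∈ Icc Z X, (-1 : R) ^ #(X \ Y) = if Z = X then 1 else 0 := by
  have hcompl : ∑ Y ∈ Icc Z X, (-1 : R) ^ #(X \ Y) = ∑ T ∈ (X \ Z).powerset, (-1 : R) ^ #T := by
    refine sum_nbij' (X \ ·) (X \ ·) ?_ ?_ ?_ ?_ (fun _ _ => rfl)
    · intro Y hY
      exact mem_powerset.2 (sdiff_subset_sdiff le_rfl (mem_Icc.1 hY).1)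
    · intro T hT
      have hTZ := (subset_sdiff.1 (mem_powerset.1 hT)).2
      exact mem_Icc.2 ⟨subset_sdiff.2 ⟨hZX, hTZ.symm⟩, sdiff_subset⟩
    · intro Y hY
      exact Finset.sdiff_sdiff_eq_self (mem_Icc.1 hY).2
    · intro T hT
      exact Finset.sdiff_sdiff_eq_self ((mem_powerset.1 hT).trans sdiff_subset)
  have hint := congrArg (Int.cast : ℤ → R) (sum_powerset_neg_one_pow_card (x := X \ Z))
  push_cast at hint
  rw [hcompl, hint]
  exact if_congr (sdiff_eq_empty_iff_subset.trans ⟨hZX.antisymm, fun h => h ▸ le_rfl⟩) rfl rfl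

theorem moebiusT_zetaT (h : Finset V → R) : moebiusT (zetaT h) = h := by
  funext X
  calc moebiusT (zetaT h) X
      = ∑ Y ∈ X.powerset, ∑ Z ∈ Y.powerset, (-1 : R) ^ #(X \ Y) * h Z := by
        simp only [moebiusT, zetaT, mul_sum]
    _ = ∑ Z ∈ X.powerset, ∑ Y ∈ Icc Z X, (-1 : R) ^ #(X \ Y) * h Z :=
        sum_comm' fun Y Z => by
          simp only [mem_powerset, mem_Icc]
          exact ⟨fun h => ⟨⟨h.2, h.1⟩, h.2.trans h.1⟩, fun h => ⟨h.1.2, h.1.1⟩⟩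
    _ = ∑ Z ∈ X.powerset, (if Z = X then 1 else 0) * h Z := by
        refine sum_congr rfl fun Z hZ => ?_
        rw [← sum_mul, sum_Icc_neg_one_pow_card_sdiff (mem_powerset.1 hZ)]
    _ = h X := by simp

theorem unionProd_eq_sum_of_subset (f g : Finset V → R) {X Y : Finset V} (hYX : Y ⊆ X) :
    unionProd f g Y =
      ∑ p ∈ (X.powerset ×ˢ X.powerset).filter (fun p => p.1 ∪ p.2 = Y), f p.1 * g p.2 := by
  refine sum_congr (ext fun p => ?_) fun _ _ => rfl
  simp only [mem_filter, mem_product, mem_powerset]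
  constructor
  · rintro ⟨⟨hA, hB⟩, hAB⟩
    exact ⟨⟨hA.trans hYX, hB.trans hYX⟩, hAB⟩
  · rintro ⟨-, hAB⟩
    exact ⟨⟨hAB ▸ subset_union_left, hAB ▸ subset_union_right⟩, hAB⟩

theorem zetaT_unionProd (f g : Finset V → R) (X : Finset V) :
    zetaT (unionProd f g) X = zetaT f X * zetaT g X := by
  rw [zetaT, zetaT, zetaT, sum_mul_sum, ← sum_product']
  rw [sum_congr rfl fun Y hY => unionProd_eq_sum_of_subset f g (mem_powerset.1 hY)]
  refine sum_fiberwise_of_maps_to (fun p hp => ?_) _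
  simp only [mem_product, mem_powerset] at hp
  exact mem_powerset.2 (union_subset hp.1 hp.2)

end

theorem stmt_12_general {V R : Type*} [DecidableEq V] [CommRing R]
    (f g : Finset V → R) :
    (∀ X : Finset V, zetaT (unionProd f g) X = zetaT f X * zetaT g X) ∧
    unionProd f g = moebiusT (fun X => zetaT f X * zetaT g X) := by
  have hzeta : zetaT (unionProd f g) = fun X => zetaT f X * zetaT g X :=
    funext (zetaT_unionProd f g)
  exact ⟨zetaT_unionProd f g, by rw [← hzeta, moebiusT_zetaT]⟩

theorem stmt_12 {V R : Type*} [DecidableEq V] [Fintype V] [CommRing R]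
    (f g : Finset V → R) :
    (∀ X : Finset V, zetaT (unionProd f g) X = zetaT f X * zetaT g X) ∧
    unionProd f g = moebiusT (fun X => zetaT f X * zetaT g X) :=
  stmt_12_general f g
end

section
/- The incidence treewidth of a constraint system F is at most its dual treewidth plus 1. More precisely, given a tree decomposition of the dual graph of F of width d, one can construct a tree decomposition of the incidence graph of F of width at most d + 1. -/
/-- `(T, b)` is a tree decomposition of the simple graph `G`. -/
def IsTreeDecomp {V ι : Type*} (T : SimpleGraph ι) (b : ι → Finset V)
    (G : SimpleGraph V) : Prop :=
  (∀ v, ∃ t, v ∈ b t) ∧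
  (∀ u v, G.Adj u v → ∃ t, u ∈ b t ∧ v ∈ b t) ∧
  (∀ v, (T.induce {t | v ∈ b t}).Connected)

/-- The incidence graph of a constraint system: vertices are constraints and
variables, a constraint `c` is adjacent to a variable `v` iff `v ∈ var c`. -/
def incidenceGraph {C V : Type*} (var : C → Finset V) : SimpleGraph (C ⊕ V) :=
  SimpleGraph.fromRel
    (fun x y => ∃ c v, x = Sum.inl c ∧ y = Sum.inr v ∧ v ∈ var c)

section Helpers

open SimpleGraph

variable {ι : Type*} {T : SimpleGraph ι}

private lemma td_singleton_connected {α : Type*} (G : SimpleGraph α) (x : α) :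
    (G.induce {x}).Connected := by
  haveI : Nonempty ↥({x} : Set α) := ⟨⟨x, rfl⟩⟩
  constructor
  rintro ⟨a, ha⟩ ⟨b, hb⟩
  simp only [Set.mem_singleton_iff] at ha hb
  have hab : (⟨a, ha⟩ : ↥({x} : Set α)) = ⟨b, hb⟩ := Subtype.ext (ha.trans hb.symm)
  rw [hab]

private lemma td_connected_of_iso {α β : Type*} {G : SimpleGraph α} {H : SimpleGraph β}
    (φ : G ≃g H) (h : G.Connected) : H.Connected :=
  h.map φ.toHom φ.toEquiv.surjective

private lemma td_isTree_of_iso {α β : Type*} {G : SimpleGraph α} {H : SimpleGraph β}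
    (φ : G ≃g H) (h : G.IsTree) : H.IsTree := by
  refine ⟨td_connected_of_iso φ h.1, ?_⟩
  intro v p hp
  have hc : (p.map φ.symm.toHom).IsCycle :=
    (SimpleGraph.Walk.map_isCycle_iff_of_injective φ.symm.toEquiv.injective).mpr hp
  exact h.2 _ hc

private lemma td_induce_univ_connected {α : Type*} {G : SimpleGraph α} (h : G.Connected) :
    (G.induce Set.univ).Connected :=
  td_connected_of_iso (induceUnivIso G).symm h

private lemma td_isAcyclic_induce {α : Type*} {G : SimpleGraph α} (h : G.IsAcyclic) (S : Set α) :
    (G.induce S).IsAcyclic := by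
  intro v p hp
  have hc : (p.map (⟨Subtype.val, fun {u v} h => h⟩ : G.induce S →g G)).IsCycle :=
    (SimpleGraph.Walk.map_isCycle_iff_of_injective Subtype.val_injective).mpr hp
  exact h _ hc

private lemma td_path_support_subset (hac : T.IsAcyclic) {S : Set ι}
    (hS : (T.induce S).Connected) {a b : ι} (ha : a ∈ S) (hb : b ∈ S)
    (p : T.Walk a b) (hp : p.IsPath) : ∀ x ∈ p.support, x ∈ S := by
  classical
  obtain ⟨w1⟩ := hS ⟨a, ha⟩ ⟨b, hb⟩
  let valHom : T.induce S →g T := ⟨Subtype.val, fun {u v} h => h⟩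
  have hsub : ∀ x ∈ (w1.map valHom).support, x ∈ S := by
    intro x hx
    rw [SimpleGraph.Walk.support_map] at hx
    obtain ⟨u, _, rfl⟩ := List.mem_map.mp hx
    exact u.2
  have huniq := hac.path_unique ⟨p, hp⟩
    ⟨(w1.map valHom).bypass, SimpleGraph.Walk.bypass_isPath _⟩
  have hpe : p = (w1.map valHom).bypass := congrArg Subtype.val huniq
  intro x hx
  exact hsub x (SimpleGraph.Walk.support_bypass_subset _ (hpe ▸ hx))

private lemma td_exists_path (hc : T.Connected) (a b : ι) : ∃ p : T.Walk a b, p.IsPath := by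
  classical
  exact (hc a b).elim fun w => ⟨w.bypass, w.bypass_isPath⟩

private lemma td_conn_inter (hT : T.IsTree) {A B : Set ι}
    (hA : (T.induce A).Connected) (hB : (T.induce B).Connected)
    (hne : (A ∩ B).Nonempty) : (T.induce (A ∩ B)).Connected := by
  haveI : Nonempty ↥(A ∩ B) := hne.to_subtype
  constructor
  rintro ⟨x, hxA, hxB⟩ ⟨y, hyA, hyB⟩
  obtain ⟨p, hp⟩ := td_exists_path hT.1 x y
  have h1 := td_path_support_subset hT.2 hA hxA hyA p hp
  have h2 := td_path_support_subset hT.2 hB hxB hyB p hp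
  have hsub : {z | z ∈ p.support} ⊆ A ∩ B := fun z hz => ⟨h1 z hz, h2 z hz⟩
  have hr := (p.connected_induce_support) ⟨x, p.start_mem_support⟩ ⟨y, p.end_mem_support⟩
  exact hr.map (induceHomOfLE T hsub).toHom

private lemma td_median (hT : T.IsAcyclic) {b : ι} :
    ∀ {a w : ι} (p1 : T.Walk a w), p1.IsPath →
      ∀ (p2 : T.Walk w b), p2.IsPath → ∀ (p : T.Walk a b), p.IsPath →
      ∃ m, m ∈ p.support ∧ m ∈ p1.support ∧ m ∈ p2.support := by
  classical
  intro a w p1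
  induction p1 with
  | @nil u =>
    intro _ p2 _ p _
    exact ⟨u, p.start_mem_support, by simp, p2.start_mem_support⟩
  | @cons u c w h q ih =>
    intro hp1 p2 hp2 p hp
    by_cases hmem : u ∈ p2.support
    · exact ⟨u, p.start_mem_support, SimpleGraph.Walk.start_mem_support _, hmem⟩
    · have hbridge := (isAcyclic_iff_forall_adj_isBridge.mp hT) h
      rw [isBridge_iff_adj_and_forall_walk_mem_edges] at hbridge
      have he := hbridge (p.append (p2.reverse.append q.reverse))
      simp only [SimpleGraph.Walk.edges_append, SimpleGraph.Walk.edges_reverse,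
        List.mem_append, List.mem_reverse] at he
      have hcp : c ∈ p.support := by
        rcases he with (h1 | (h2 | h3))
        · exact SimpleGraph.Walk.snd_mem_support_of_mem_edges p h1
        · exact absurd (SimpleGraph.Walk.fst_mem_support_of_mem_edges p2 h2) hmem
        · exact absurd (SimpleGraph.Walk.fst_mem_support_of_mem_edges q h3)
            ((SimpleGraph.Walk.cons_isPath_iff h q).mp hp1).2
      obtain ⟨m, hm1, hm2, hm3⟩ := ih hp1.of_cons p2 hp2 (p.dropUntil c hcp) (hp.dropUntil hcp)
      exact ⟨m, SimpleGraph.Walk.support_dropUntil_subset _ _ hm1, by simp [hm2], hm3⟩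

private lemma td_triple (hT : T.IsTree) {A B S : Set ι}
    (hA : (T.induce A).Connected) (hB : (T.induce B).Connected) (hS : (T.induce S).Connected)
    (hAB : (A ∩ B).Nonempty) (hAS : (A ∩ S).Nonempty) (hBS : (B ∩ S).Nonempty) :
    (A ∩ B ∩ S).Nonempty := by
  obtain ⟨w, hwA, hwB⟩ := hAB
  obtain ⟨a, haA, haS⟩ := hAS
  obtain ⟨c, hcB, hcS⟩ := hBS
  obtain ⟨p, hp⟩ := td_exists_path hT.1 a c
  obtain ⟨p1, hp1⟩ := td_exists_path hT.1 a w
  obtain ⟨p2, hp2⟩ := td_exists_path hT.1 w c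
  obtain ⟨m, hm, hm1, hm2⟩ := td_median hT.2 p1 hp1 p2 hp2 p hp
  exact ⟨m, ⟨⟨td_path_support_subset hT.2 hA haA hwA p1 hp1 m hm1,
    td_path_support_subset hT.2 hB hwB hcB p2 hp2 m hm2⟩,
    td_path_support_subset hT.2 hS haS hcS p hp m hm⟩⟩

private lemma td_helly {κ : Type*} (hT : T.IsTree) (f : κ → Set ι)
    (hconn : ∀ i, (T.induce (f i)).Connected)
    (hpair : ∀ i j, (f i ∩ f j).Nonempty) (Q : Finset κ) :
    (T.induce (⋂ i ∈ Q, f i)).Connected ∧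
      ∀ Bs : Set ι, (T.induce Bs).Connected → (∀ i ∈ Q, (Bs ∩ f i).Nonempty) →
        (Bs ∩ ⋂ i ∈ Q, f i).Nonempty := by
  classical
  induction Q using Finset.induction_on with
  | empty =>
    have hU : (⋂ i ∈ (∅ : Finset κ), f i) = Set.univ := by simp
    constructor
    · rw [hU]
      exact td_induce_univ_connected hT.1
    · intro Bs hBs _
      rw [hU, Set.inter_univ]
      exact Set.nonempty_coe_sort.mp hBs.nonempty
  | @insert a Q ha ih =>
    obtain ⟨IHc, IHa⟩ := ih
    have hI : ⋂ i ∈ insert a Q, f i = f a ∩ ⋂ i ∈ Q, f i := by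
      simp [Set.iInter_iInter_eq_or_left]
    have hne : (f a ∩ ⋂ i ∈ Q, f i).Nonempty :=
      IHa (f a) (hconn a) (fun i _ => hpair a i)
    constructor
    · rw [hI]
      exact td_conn_inter hT (hconn a) IHc hne
    · intro Bs hBs hmeet
      rw [hI]
      have h1 : (Bs ∩ f a).Nonempty := hmeet a (Finset.mem_insert_self a Q)
      have h2 : (Bs ∩ ⋂ i ∈ Q, f i).Nonempty :=
        IHa Bs hBs (fun i hi => hmeet i (Finset.mem_insert_of_mem hi))
      have h3 := td_triple hT (hconn a) IHc hBs hne
        (by rwa [Set.inter_comm] at h1) (by rwa [Set.inter_comm] at h2)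
      obtain ⟨m, ⟨hm1, hm2⟩, hm3⟩ := h3
      exact ⟨m, hm3, hm1, hm2⟩

private lemma td_induce_connected_map {α β : Type*} {G : SimpleGraph α} {H : SimpleGraph β}
    (m : α → β) {S : Set α}
    (hadj : ∀ a ∈ S, ∀ a' ∈ S, G.Adj a a' → H.Adj (m a) (m a'))
    (hconn : (G.induce S).Connected) : (H.induce (m '' S)).Connected := by
  let hhom : G.induce S →g H.induce (m '' S) :=
    { toFun := fun x => ⟨m x.1, ⟨x.1, x.2, rfl⟩⟩
      map_rel' := fun {x y} h => hadj x.1 x.2 y.1 y.2 h }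
  refine hconn.map hhom ?_
  rintro ⟨_, a, haS, rfl⟩
  exact ⟨⟨a, haS⟩, rfl⟩

private lemma td_connected_induce_comap {α β : Type*} (e : α ≃ β) (H : SimpleGraph β) (S : Set β)
    (h : (H.induce S).Connected) : ((H.comap ⇑e).induce (⇑e ⁻¹' S)).Connected := by
  let hhom : H.induce S →g (H.comap ⇑e).induce (⇑e ⁻¹' S) :=
    { toFun := fun x => ⟨e.symm x.1, by simpa [Set.mem_preimage] using x.2⟩
      map_rel' := fun {x y} hxy => by
        have h' : H.Adj ↑x ↑y := hxy
        show H.Adj (e (e.symm ↑x)) (e (e.symm ↑y))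
        simpa using h' }
  refine h.map hhom ?_
  rintro ⟨i, hi⟩
  exact ⟨⟨e i, hi⟩, Subtype.ext (e.symm_apply_apply i)⟩

/-- The graph obtained from `G` by attaching, for every `v : β`, a pendant
vertex `Sum.inr v` to `Sum.inl (f v)`. -/
def tdPendant {α β : Type*} (G : SimpleGraph α) (f : β → α) : SimpleGraph (α ⊕ β) where
  Adj x y :=
    match x, y with
    | Sum.inl a, Sum.inl b => G.Adj a b
    | Sum.inl a, Sum.inr v => a = f v
    | Sum.inr v, Sum.inl a => a = f v
    | Sum.inr _, Sum.inr _ => False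
  symm := by
    constructor
    rintro (a | v) (b | w) h
    · exact h.symm
    · exact h
    · exact h
    · exact h.elim
  loopless := by
    constructor
    rintro (a | v) h
    · exact G.irrefl h
    · exact h

@[simp] private lemma tdPendant_adj_inl_inl {α β : Type*} {G : SimpleGraph α} {f : β → α}
    {a b : α} : (tdPendant G f).Adj (Sum.inl a) (Sum.inl b) ↔ G.Adj a b := Iff.rfl

@[simp] private lemma tdPendant_adj_inl_inr {α β : Type*} {G : SimpleGraph α} {f : β → α}
    {a : α} {v : β} : (tdPendant G f).Adj (Sum.inl a) (Sum.inr v) ↔ a = f v := Iff.rfl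

@[simp] private lemma tdPendant_adj_inr_inl {α β : Type*} {G : SimpleGraph α} {f : β → α}
    {a : α} {v : β} : (tdPendant G f).Adj (Sum.inr v) (Sum.inl a) ↔ a = f v := Iff.rfl

@[simp] private lemma tdPendant_adj_inr_inr {α β : Type*} {G : SimpleGraph α} {f : β → α}
    {v w : β} : (tdPendant G f).Adj (Sum.inr v) (Sum.inr w) ↔ False := Iff.rfl

private lemma tdPendant_nbr {α β : Type*} {G : SimpleGraph α} {f : β → α} {v : β}
    {y : α ⊕ β} (h : (tdPendant G f).Adj (Sum.inr v) y) : y = Sum.inl (f v) := by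
  rcases y with a | w
  · rw [tdPendant_adj_inr_inl] at h
    rw [h]
  · exact h.elim

private lemma tdPendant_strip {α β : Type*} {G : SimpleGraph α} {f : β → α} :
    ∀ {x y : α ⊕ β} (p : (tdPendant G f).Walk x y)
      (_ : ∀ z ∈ p.support, ∃ a : α, z = Sum.inl a) {a c : α}
      (_ : x = Sum.inl a) (_ : y = Sum.inl c),
      ∃ q : G.Walk a c, q.support.map Sum.inl = p.support ∧
        q.edges.map (Sym2.map Sum.inl) = p.edges := by
  intro x y p
  induction p with
  | nil =>
    rintro _ a c rfl hy
    obtain rfl : a = c := Sum.inl_injective hy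
    exact ⟨SimpleGraph.Walk.nil, by simp, by simp⟩
  | @cons u z y h p ih =>
    rintro hs a c rfl rfl
    obtain ⟨a', rfl⟩ := hs z (by simp [SimpleGraph.Walk.support_cons])
    have hGa : G.Adj a a' := h
    obtain ⟨q, hsup, hedg⟩ := ih (fun w hw => hs w (by simp [SimpleGraph.Walk.support_cons, hw]))
      rfl rfl
    refine ⟨SimpleGraph.Walk.cons hGa q, ?_, ?_⟩
    · simp [SimpleGraph.Walk.support_cons, hsup]
    · simp [SimpleGraph.Walk.edges_cons, hedg, Sym2.map_pair_eq]

private lemma tdPendant_isTree {α β : Type*} {G : SimpleGraph α} (hG : G.IsTree) (f : β → α) :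
    (tdPendant G f).IsTree := by
  let inlHom : G →g tdPendant G f := ⟨Sum.inl, fun {u v} h => h⟩
  constructor
  · -- connected
    haveI : Nonempty (α ⊕ β) := ⟨Sum.inl hG.1.nonempty.some⟩
    constructor
    have key : ∀ x : α ⊕ β, ∃ a : α, (tdPendant G f).Reachable x (Sum.inl a) := by
      rintro (a | v)
      · exact ⟨a, SimpleGraph.Reachable.refl _⟩
      · exact ⟨f v, SimpleGraph.Adj.reachable (by simp)⟩
    intro x y
    obtain ⟨a, hxa⟩ := key x
    obtain ⟨a', hya⟩ := key y
    exact (hxa.trans ((hG.1 a a').map inlHom)).trans hya.symm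
  · -- acyclic
    classical
    intro x p hp
    rcases Classical.em (∃ v : β, Sum.inr v ∈ p.support) with hinr | hinr
    · obtain ⟨v, hv⟩ := hinr
      -- rotate the cycle to start at the pendant vertex
      have hq : (p.rotate _ hv).IsCycle := hp.rotate hv
      set q := p.rotate _ hv with hqdef
      clear_value q
      clear hqdef hp hv
      rcases q with _ | ⟨h, r⟩
      · exact hq.not_of_nil
      · -- q = cons h r with h : Adj (inr v) y
        have hy := tdPendant_nbr h
        subst hy
        rw [SimpleGraph.Walk.cons_isCycle_iff] at hq
        -- last edge of r also enters inr v from inl (f v)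
        have hnn : ¬ r.reverse.Nil := SimpleGraph.Walk.not_nil_of_ne (by simp)
        obtain ⟨y1, hadj1, r1, hr1⟩ := SimpleGraph.Walk.not_nil_iff.mp hnn
        have hy1 := tdPendant_nbr hadj1
        subst hy1
        have hmem : s(Sum.inr v, Sum.inl (f v)) ∈ r.reverse.edges := by
          rw [hr1]
          simp [SimpleGraph.Walk.edges_cons]
        rw [SimpleGraph.Walk.edges_reverse, List.mem_reverse] at hmem
        exact hq.2 hmem
    · push_neg at hinr
      have hall : ∀ z ∈ p.support, ∃ a : α, z = Sum.inl a := by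
        intro z hz
        rcases z with a | v
        · exact ⟨a, rfl⟩
        · exact absurd hz (hinr v)
      obtain ⟨a, rfl⟩ := hall x p.start_mem_support
      obtain ⟨q, hsup, hedg⟩ := tdPendant_strip p hall rfl rfl
      rw [SimpleGraph.Walk.isCycle_def] at hp
      obtain ⟨hpt, hpn, hps⟩ := hp
      refine hG.2 q ?_
      rw [SimpleGraph.Walk.isCycle_def]
      refine ⟨?_, ?_, ?_⟩
      · rw [SimpleGraph.Walk.isTrail_def] at hpt ⊢
        rw [← hedg] at hpt
        exact hpt.of_map _
      · intro hqnil
        apply hpn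
        have hsupp : p.support = [Sum.inl a] := by
          rw [← hsup, hqnil]
          simp
        exact (SimpleGraph.Walk.nil_iff_support_eq.mpr hsupp).eq_nil
      · rw [← hsup] at hps
        rw [← List.map_tail] at hps
        exact hps.of_map _

end Helpers

/-- From a width-`d` tree decomposition of the dual graph of a constraint
system one can construct a tree decomposition of its incidence graph of width
at most `d + 1` (i.e. bags of size at most `d + 2`). -/
theorem stmt_16 {C V : Type*} [Fintype C] [Fintype V] [DecidableEq C]
    [DecidableEq V]
    (var : C → Finset V) (hcover : ∀ x : V, ∃ c, x ∈ var c)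
    (d : ℕ) (ι : Type*) (T : SimpleGraph ι) (hT : T.IsTree)
    (b : ι → Finset C)
    (hTD : IsTreeDecomp T b
      (SimpleGraph.fromRel (fun c c' : C => ¬ Disjoint (var c) (var c'))))
    (hw : ∀ t, (b t).card ≤ d + 1) :
    ∃ (ι' : Type) (T' : SimpleGraph ι') (b' : ι' → Finset (C ⊕ V)),
      T'.IsTree ∧ IsTreeDecomp T' b' (incidenceGraph var) ∧
      ∀ t, (b' t).card ≤ d + 2 := by
  classical
  open SimpleGraph in
  obtain ⟨hcov, hedge, hconn⟩ := hTD
  -- choose a representative bag for each constraint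
  choose tc htc using hcov
  -- Helly: choose an anchor bag for each variable containing all constraints using it
  have hanchor : ∀ v : V, ∃ t : ι, ∀ c : C, v ∈ var c → c ∈ b t := by
    intro v
    set f : C → Set ι := fun c => if v ∈ var c then {t | c ∈ b t} else Set.univ with hf
    have hfconn : ∀ c, (T.induce (f c)).Connected := by
      intro c
      by_cases h : v ∈ var c
      · have hfc : f c = {t | c ∈ b t} := by simp [hf, h]
        rw [hfc]
        exact hconn c
      · have hfc : f c = Set.univ := by simp [hf, h]
        rw [hfc]
        exact td_induce_univ_connected hT.1
    have hfpair : ∀ c c', (f c ∩ f c').Nonempty := by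
      intro c c'
      by_cases h : v ∈ var c
      · by_cases h' : v ∈ var c'
        · by_cases hcc : c = c'
          · subst hcc
            exact ⟨tc c, by simp [hf, h, htc c]⟩
          · obtain ⟨t, h1, h2⟩ := hedge c c'
              ((SimpleGraph.fromRel_adj _ _ _).mpr
                ⟨hcc, Or.inl (Finset.not_disjoint_iff.mpr ⟨v, h, h'⟩)⟩)
            exact ⟨t, by simp [hf, h, h', h1, h2]⟩
        · exact ⟨tc c, by simp [hf, h, h', htc c]⟩
      · by_cases h' : v ∈ var c'
        · exact ⟨tc c', by simp [hf, h, h', htc c']⟩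
        · exact ⟨tc c, by simp [hf, h, h']⟩
    obtain ⟨hc, _⟩ := td_helly hT f hfconn hfpair Finset.univ
    obtain ⟨⟨t, ht⟩⟩ := hc.nonempty
    refine ⟨t, fun c hvc => ?_⟩
    have hm := Set.mem_iInter₂.mp ht c (Finset.mem_univ c)
    have hfc : f c = {t | c ∈ b t} := by simp [hf, hvc]
    rw [hfc] at hm
    exact hm
  choose ta hta using hanchor
  -- the finite subtree W spanned by the chosen bags
  obtain ⟨t0⟩ := hT.1.nonempty
  let pc : ∀ c : C, T.Walk t0 (tc c) := fun c => (hT.1 t0 (tc c)).some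
  let pv : ∀ v : V, T.Walk t0 (ta v) := fun v => (hT.1 t0 (ta v)).some
  let W : Set ι := {t0} ∪
    ((⋃ c : C, {z | z ∈ (pc c).support}) ∪ ⋃ v : V, {z | z ∈ (pv v).support})
  have hWfin : W.Finite := by
    refine Set.Finite.union (Set.finite_singleton t0) (Set.Finite.union ?_ ?_) <;>
      exact Set.finite_iUnion (fun i => List.finite_toSet _)
  have ht0W : t0 ∈ W := Or.inl rfl
  have htcW : ∀ c, tc c ∈ W := fun c =>
    Or.inr (Or.inl (Set.mem_iUnion.mpr ⟨c, (pc c).end_mem_support⟩))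
  have htaW : ∀ v, ta v ∈ W := fun v =>
    Or.inr (Or.inr (Set.mem_iUnion.mpr ⟨v, (pv v).end_mem_support⟩))
  have hWconn : (T.induce W).Connected := by
    apply SimpleGraph.induce_connected_of_patches t0 ht0W
    intro x hx
    rcases hx with hx | hx | hx
    · refine ⟨{t0}, fun z hz => Or.inl hz, rfl, hx, ?_⟩
      have hxx : (⟨t0, rfl⟩ : ↥({t0} : Set ι)) = ⟨x, hx⟩ := Subtype.ext hx.symm
      rw [← hxx]
    · obtain ⟨c, hc⟩ := Set.mem_iUnion.mp hx
      exact ⟨{z | z ∈ (pc c).support}, fun z hz => Or.inr (Or.inl (Set.mem_iUnion.mpr ⟨c, hz⟩)),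
        (pc c).start_mem_support, hc,
        ((pc c).connected_induce_support ⟨t0, (pc c).start_mem_support⟩ ⟨x, hc⟩)⟩
    · obtain ⟨v, hv⟩ := Set.mem_iUnion.mp hx
      exact ⟨{z | z ∈ (pv v).support}, fun z hz => Or.inr (Or.inr (Set.mem_iUnion.mpr ⟨v, hz⟩)),
        (pv v).start_mem_support, hv,
        ((pv v).connected_induce_support ⟨t0, (pv v).start_mem_support⟩ ⟨x, hv⟩)⟩
  haveI : Fintype ↥W := hWfin.fintype
  have hWtree : (T.induce W).IsTree := ⟨hWconn, td_isAcyclic_induce hT.2 W⟩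
  -- the pendant tree
  let fW : V → ↥W := fun v => ⟨ta v, htaW v⟩
  let H : SimpleGraph (↥W ⊕ V) := tdPendant (T.induce W) fW
  have hHtree : H.IsTree := tdPendant_isTree hWtree fW
  -- the bags
  let B : ↥W ⊕ V → Finset (C ⊕ V) := Sum.elim
    (fun s => (b ↑s).image Sum.inl)
    (fun v => insert (Sum.inr v) ((b (ta v)).image Sum.inl))
  -- bag membership characterizations
  have hBinl : ∀ (c : C) (s : ↥W), (Sum.inl c ∈ B (Sum.inl s)) ↔ c ∈ b ↑s := by
    intro c s
    simp [B, Sum.inl_injective.eq_iff]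
  have hBinr : ∀ (c : C) (v : V), (Sum.inl c ∈ B (Sum.inr v)) ↔ c ∈ b (ta v) := by
    intro c v
    simp [B, Sum.inl_injective.eq_iff]
  have hBvl : ∀ (v : V) (s : ↥W), ¬ (Sum.inr v ∈ B (Sum.inl s)) := by
    intro v s h
    simp [B] at h
  have hBvr : ∀ (v v' : V), (Sum.inr v ∈ B (Sum.inr v')) ↔ v = v' := by
    intro v v'
    simp [B, eq_comm]
  -- tree decomposition for H
  have hdec : IsTreeDecomp H B (incidenceGraph var) := by
    refine ⟨?_, ?_, ?_⟩
    · rintro (c | v)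
      · exact ⟨Sum.inl ⟨tc c, htcW c⟩, (hBinl c _).mpr (htc c)⟩
      · exact ⟨Sum.inr v, Finset.mem_insert_self _ _⟩
    · intro u v huv
      rw [incidenceGraph, SimpleGraph.fromRel_adj] at huv
      obtain ⟨hne, hrel⟩ := huv
      rcases hrel with ⟨c, w, rfl, rfl, hcw⟩ | ⟨c, w, rfl, rfl, hcw⟩
      · exact ⟨Sum.inr w, (hBinr c w).mpr (hta w c hcw), Finset.mem_insert_self _ _⟩
      · exact ⟨Sum.inr w, Finset.mem_insert_self _ _, (hBinr c w).mpr (hta w c hcw)⟩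
    · rintro (c | v)
      · -- the set of nodes whose bag contains constraint c
        set Xc : Set (↥W ⊕ V) := {y | Sum.inl c ∈ B y} with hXc
        have hu0 : (Sum.inl ⟨tc c, htcW c⟩ : ↥W ⊕ V) ∈ Xc := (hBinl c _).mpr (htc c)
        -- base part
        let m : ι → ↥W ⊕ V := fun t =>
          if h : t ∈ W then Sum.inl ⟨t, h⟩ else Sum.inl ⟨t0, ht0W⟩
        have hScW : (T.induce ({t | c ∈ b t} ∩ W)).Connected :=
          td_conn_inter hT (hconn c) hWconn ⟨tc c, htc c, htcW c⟩
        have hA0conn : (H.induce (m '' ({t | c ∈ b t} ∩ W))).Connected := by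
          refine td_induce_connected_map m ?_ hScW
          intro t ht t' ht' hadj
          simp only [m, dif_pos ht.2, dif_pos ht'.2]
          exact hadj
        have hA0sub : m '' ({t | c ∈ b t} ∩ W) ⊆ Xc := by
          rintro y ⟨t, ⟨htc', htW⟩, rfl⟩
          simp only [m, dif_pos htW]
          exact (hBinl c _).mpr htc'
        have hmu0 : (Sum.inl ⟨tc c, htcW c⟩ : ↥W ⊕ V) ∈ m '' ({t | c ∈ b t} ∩ W) := by
          refine ⟨tc c, ⟨htc c, htcW c⟩, ?_⟩
          simp only [m, dif_pos (htcW c)]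
        apply SimpleGraph.induce_connected_of_patches (Sum.inl ⟨tc c, htcW c⟩) hu0
        rintro (s | v) hx
        · refine ⟨m '' ({t | c ∈ b t} ∩ W), hA0sub, hmu0, ?_, ?_⟩
          · refine ⟨↑s, ⟨(hBinl c s).mp hx, s.2⟩, ?_⟩
            simp only [m, dif_pos s.2]
          · exact hA0conn.preconnected _ _
        · -- pendant node containing c
          have hcv : c ∈ b (ta v) := (hBinr c v).mp hx
          have hanc : (Sum.inl (fW v) : ↥W ⊕ V) ∈ m '' ({t | c ∈ b t} ∩ W) := by
            refine ⟨ta v, ⟨hcv, htaW v⟩, ?_⟩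
            simp only [m, dif_pos (htaW v)]
            rfl
          refine ⟨m '' ({t | c ∈ b t} ∩ W) ∪ {Sum.inr v}, ?_, Or.inl hmu0, Or.inr rfl, ?_⟩
          · rintro z (hz | hz)
            · exact hA0sub hz
            · rw [hz]
              exact (hBinr c v).mpr hcv
          · have hconn' := SimpleGraph.connected_induce_union hA0conn.preconnected
              (td_singleton_connected H (Sum.inr v)).preconnected hanc rfl (by simp [H])
            exact hconn'.preconnected _ _
      · -- the set of nodes whose bag contains variable v is the singleton {inr v}
        have hXv : {y | Sum.inr v ∈ B y} = {Sum.inr v} := by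
          ext y
          rcases y with s | v'
          · simp only [Set.mem_setOf_eq, Set.mem_singleton_iff]
            exact ⟨fun h => absurd h (hBvl v s), fun h => by simp at h⟩
          · simp only [Set.mem_setOf_eq, Set.mem_singleton_iff, hBvr v v']
            exact ⟨fun h => by rw [h], fun h => Sum.inr_injective h |>.symm ▸ rfl⟩
        rw [hXv]
        exact td_singleton_connected H (Sum.inr v)
  have hcard : ∀ x, (B x).card ≤ d + 2 := by
    rintro (s | v)
    · calc ((b ↑s).image Sum.inl).card ≤ (b ↑s).card := Finset.card_image_le
        _ ≤ d + 1 := hw _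
        _ ≤ d + 2 := by omega
    · calc (insert (Sum.inr v) ((b (ta v)).image Sum.inl)).card
          ≤ ((b (ta v)).image Sum.inl).card + 1 := Finset.card_insert_le _ _
        _ ≤ (b (ta v)).card + 1 := by
            have := Finset.card_image_le (f := (Sum.inl : C → C ⊕ V)) (s := b (ta v))
            omega
        _ ≤ d + 2 := by have := hw (ta v); omega
  -- transfer to a `Type 0` index type
  let e : (↥W ⊕ V) ≃ Fin (Fintype.card (↥W ⊕ V)) := Fintype.equivFin _
  refine ⟨Fin (Fintype.card (↥W ⊕ V)), H.comap ⇑e.symm, fun i => B (e.symm i), ?_, ⟨?_, ?_, ?_⟩,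
    fun i => hcard _⟩
  · exact td_isTree_of_iso (SimpleGraph.Iso.comap e.symm H).symm hHtree
  · intro x
    obtain ⟨y, hy⟩ := hdec.1 x
    exact ⟨e y, by simpa using hy⟩
  · intro u v huv
    obtain ⟨y, h1, h2⟩ := hdec.2.1 u v huv
    exact ⟨e y, by simpa using h1, by simpa using h2⟩
  · intro x
    exact td_connected_induce_comap e.symm H {y | x ∈ B y} (hdec.2.2 x)
end
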